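/- The matrices R and T preserve the quadric surface S = {(x,y,z) ∈ ℝ³ : 4(x−z)² + 4y² = (x−y+z)²}: if (x,y,z) satisfies 4(x−z)² + 4y² = (x−y+z)², then both R·(x,y,z) and T·(x,y,z) satisfy the same equation. -/

import Mathlib

/-!
The quadratic form `4(x−z)² + 4y² − (x−y+z)²` has Gram matrix `G = !![3,1,-5; 1,3,1; -5,1,3]`,
and both `R` and `T` are isometries of it: `Rᵀ G R = G` and `Tᵀ G T = G`. An isometry preserves
the value of the form at every vector, in particular it maps the null cone `S` into itself.
-/

open Matrix

def R : Matrix (Fin 3) (Fin 3) ℝ := !![0,0,-1; 1,0,-1; 0,1,-1]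

def T : Matrix (Fin 3) (Fin 3) ℝ := !![-1,0,0; 2,1,0; -4,0,1]

theorem Matrix.mulVec_dotProduct_mulVec_mulVec {n α : Type*} [Fintype n] [CommSemiring α]
    {M G : Matrix n n α} (hM : Mᵀ * G * M = G) (v : n → α) :
    M *ᵥ v ⬝ᵥ G *ᵥ (M *ᵥ v) = v ⬝ᵥ G *ᵥ v := by
  rw [mulVec_mulVec, dotProduct_mulVec, ← vecMul_transpose, vecMul_vecMul, ← Matrix.mul_assoc, hM,
    ← dotProduct_mulVec]

def quadricGram : Matrix (Fin 3) (Fin 3) ℝ := !![3,1,-5; 1,3,1; -5,1,3]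

theorem quadric_eq_dotProduct_quadricGram (w : Fin 3 → ℝ) :
    4 * (w 0 - w 2) ^ 2 + 4 * w 1 ^ 2 - (w 0 - w 1 + w 2) ^ 2 = w ⬝ᵥ quadricGram *ᵥ w := by
  simp only [Fin.isValue, dotProduct, mulVec, quadricGram, of_apply, cons_val', cons_val_fin_one,
    Fin.sum_univ_three, cons_val_zero, cons_val_one, cons_val, one_mul, neg_mul]
  ring

theorem transpose_R_mul_quadricGram_mul_R : Rᵀ * quadricGram * R = quadricGram := by
  ext i j
  fin_cases i <;> fin_cases j <;> simp [R, quadricGram, mul_apply, Fin.sum_univ_three] <;> norm_num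

theorem transpose_T_mul_quadricGram_mul_T : Tᵀ * quadricGram * T = quadricGram := by
  ext i j
  fin_cases i <;> fin_cases j <;> simp [T, quadricGram, mul_apply, Fin.sum_univ_three] <;> norm_num

/-- `R` and `T` preserve the quadric surface `4(x−z)² + 4y² = (x−y+z)²`. -/
theorem quadric_invariance (x y z : ℝ)
    (h : 4 * (x - z) ^ 2 + 4 * y ^ 2 = (x - y + z) ^ 2) :
    (4 * ((R.mulVec ![x, y, z]) 0 - (R.mulVec ![x, y, z]) 2) ^ 2 +
        4 * ((R.mulVec ![x, y, z]) 1) ^ 2 =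
      ((R.mulVec ![x, y, z]) 0 - (R.mulVec ![x, y, z]) 1 + (R.mulVec ![x, y, z]) 2) ^ 2) ∧
    (4 * ((T.mulVec ![x, y, z]) 0 - (T.mulVec ![x, y, z]) 2) ^ 2 +
        4 * ((T.mulVec ![x, y, z]) 1) ^ 2 =
      ((T.mulVec ![x, y, z]) 0 - (T.mulVec ![x, y, z]) 1 + (T.mulVec ![x, y, z]) 2) ^ 2) := by
  have hv : ![x, y, z] ⬝ᵥ quadricGram *ᵥ ![x, y, z] = 0 := by
    rw [← quadric_eq_dotProduct_quadricGram]
    simpa [sub_eq_zero] using h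
  constructor <;> rw [← sub_eq_zero, quadric_eq_dotProduct_quadricGram]
  · rwa [mulVec_dotProduct_mulVec_mulVec transpose_R_mul_quadricGram_mul_R]
  · rwa [mulVec_dotProduct_mulVec_mulVec transpose_T_mul_quadricGram_mul_T]
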